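/- arXiv:1806.03672 — 5 statements merged into one kernel-verified Lean document; each statement's English description precedes it below -/
import Mathlib

section
/- Let G be a finite group in which every non-normal primary subgroup satisfies the Frobenius normalizer condition. Then every maximal nilpotent subgroup U of G with F(G)U = G is a Carter subgroup of G. -/
/-!
Let `x ∈ N_G(U)` have order `q ^ k`. It normalizes every primary component `U_p` of `U`, and for
`p ≠ q` it centralizes `U_p`, because `N_G(U_p)/C_G(U_p)` is a `p`-group: by hypothesis when
`U_p` is not normal, and when `U_p` is normal because `G = F(G)U ≤ S C_G(U_p)` for a Sylow
`p`-subgroup `S ⊇ U_p` (the `p'`-parts of `F(G)` and of `U` centralize `U_p`). So the `q`-group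
`⟨x⟩U_q` centralizes `U_{q'}`, their join is a nilpotent overgroup of `U`, and maximality gives
`x ∈ U`. As `N_G(U)` is generated by its elements of prime-power order, `N_G(U) = U`.
-/

open Subgroup

/-- The supremum of a family of normal subgroups is normal. -/
theorem Subgroup.normal_iSup_of_normal {G : Type*} [Group G] {ι : Sort*} (H : ι → Subgroup G)
    (h : ∀ i, (H i).Normal) : (⨆ i, H i).Normal := by
  constructor
  intro x hx g
  refine Subgroup.iSup_induction (C := fun y => g * y * g⁻¹ ∈ ⨆ i, H i) H hx
    (fun i y hy => le_iSup H i ((h i).conj_mem y hy g)) (by simpa using Subgroup.one_mem _) ?_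
  intro a b ha hb
  have heq : g * (a * b) * g⁻¹ = (g * a * g⁻¹) * (g * b * g⁻¹) := by group
  rw [heq]; exact mul_mem ha hb

/-- The centralizer `C_G(P)` is a normal subgroup of the normalizer `N_G(P)`. -/
instance Subgroup.centralizer_subgroupOf_normalizer_normal {G : Type*} [Group G]
    (P : Subgroup G) : ((Subgroup.centralizer (P : Set G)).subgroupOf (Subgroup.normalizer (P : Set G))).Normal :=
  P.normalizerMonoidHom_ker ▸ P.normalizerMonoidHom.normal_ker

/-- A subgroup `P` (a `p`-subgroup) satisfies the Frobenius normalizer condition in `G`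
if `N_G(P)/C_G(P)` is a `p`-group. -/
def FrobeniusNC {G : Type*} [Group G] (p : ℕ) (P : Subgroup G) : Prop :=
  IsPGroup p (Subgroup.normalizer (P : Set G) ⧸ (Subgroup.centralizer (P : Set G)).subgroupOf (Subgroup.normalizer (P : Set G)))

/-- A subgroup is subnormal if there is a chain from it to the whole group in which
each term is normal in the next. -/
def IsSubnormal {G : Type*} [Group G] (H : Subgroup G) : Prop :=
  ∃ (n : ℕ) (c : ℕ → Subgroup G), c 0 = H ∧ c n = ⊤ ∧
    ∀ i < n, c i ≤ c (i + 1) ∧ ((c i).subgroupOf (c (i + 1))).Normal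

/-- The hypercenter `Z_∞(G)`: the largest term of the upper central series. -/
def hypercenter (G : Type*) [Group G] : Subgroup G :=
  ⨆ n, Subgroup.upperCentralSeries G n

instance hypercenter_normal (G : Type*) [Group G] : (hypercenter G).Normal :=
  Subgroup.normal_iSup_of_normal _ fun _ => inferInstance

/-- The Fitting subgroup `F(G)`: the largest normal nilpotent subgroup (of a finite group). -/
def FittingSubgroup (G : Type*) [Group G] : Subgroup G :=
  ⨆ (H : Subgroup G) (_ : H.Normal ∧ Group.IsNilpotent H), H

instance FittingSubgroup_normal (G : Type*) [Group G] : (FittingSubgroup G).Normal :=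
  Subgroup.normal_iSup_of_normal _ fun H =>
    Subgroup.normal_iSup_of_normal _ fun hH => hH.1

/-- `F_0(G)`: the product of all normal Sylow subgroups of `G`. -/
def normalSylowProduct (G : Type*) [Group G] : Subgroup G :=
  ⨆ (p : ℕ) (_ : p.Prime) (P : Sylow p G) (_ : (P : Subgroup G).Normal), (P : Subgroup G)

instance normalSylowProduct_normal (G : Type*) [Group G] : (normalSylowProduct G).Normal := by
  apply Subgroup.normal_iSup_of_normal; intro p
  apply Subgroup.normal_iSup_of_normal; intro _
  apply Subgroup.normal_iSup_of_normal; intro P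
  apply Subgroup.normal_iSup_of_normal; intro hP
  exact hP

/-- A Carter subgroup: a nilpotent self-normalizing subgroup. -/
def IsCarterSubgroup {G : Type*} [Group G] (U : Subgroup G) : Prop :=
  Group.IsNilpotent U ∧ Subgroup.normalizer (U : Set G) = U

/-- A maximal nilpotent subgroup: maximal under inclusion among nilpotent subgroups. -/
def IsMaximalNilpotent {G : Type*} [Group G] (U : Subgroup G) : Prop :=
  Group.IsNilpotent U ∧ ∀ V : Subgroup G, Group.IsNilpotent V → U ≤ V → V = U

section

variable {G : Type*} [Group G]

theorem Subgroup.mem_of_pow_mem_of_coprime {H : Subgroup G} {x : G} {m n : ℕ}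
    (hmn : m.Coprime n) (hm : x ^ m ∈ H) (hn : x ^ n ∈ H) : x ∈ H := by
  obtain ⟨a, b, hab⟩ := Nat.isCoprime_iff_coprime.mpr hmn
  have hx : x = (x ^ m) ^ a * (x ^ n) ^ b := by
    rw [← zpow_natCast x m, ← zpow_natCast x n, ← zpow_mul, ← zpow_mul, ← zpow_add,
      show (m : ℤ) * a + n * b = 1 by linarith, zpow_one]
  rw [hx]
  exact mul_mem (zpow_mem hm a) (zpow_mem hn b)

theorem Subgroup.le_of_forall_prime_power_order_mem [Finite G] {A T : Subgroup G}
    (hT : ∀ g ∈ A, ∀ r k : ℕ, r.Prime → g ^ r ^ k = 1 → g ∈ T) : A ≤ T := by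
  suffices h : ∀ n, 0 < n → ∀ g ∈ A, g ^ n = 1 → g ∈ T from
    fun g hg => h _ (orderOf_pos g) g hg (pow_orderOf_eq_one g)
  intro n
  induction n using Nat.recOnPrimeCoprime with
  | zero => exact fun h => absurd h (lt_irrefl 0)
  | prime_pow r k hr => exact fun _ g hg hgn => hT g hg r k hr hgn
  | coprime a b ha hb hab iha ihb =>
    intro _ g hg hgab
    refine mem_of_pow_mem_of_coprime hab (ihb (by omega) _ (pow_mem hg a) ?_)
      (iha (by omega) _ (pow_mem hg b) ?_)
    · rw [← pow_mul, hgab]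
    · rw [← pow_mul, mul_comm, hgab]

theorem isPGroup_zpowers_of_pow_eq_one {p k : ℕ} {g : G} (hg : g ^ p ^ k = 1) :
    IsPGroup p (zpowers g) :=
  IsPGroup.of_card_dvd_pow (n := k) (Nat.card_zpowers g ▸ orderOf_dvd_of_pow_eq_one hg)

theorem Subgroup.le_centralizer_of_disjoint {A B : Subgroup G} (hAB : A ≤ normalizer (B : Set G))
    (hBA : B ≤ normalizer (A : Set G)) (hdisj : Disjoint A B) :
    A ≤ centralizer (B : Set G) := by
  intro a ha
  rw [mem_centralizer_iff]
  intro b hb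
  have hA : b * a * b⁻¹ * a⁻¹ ∈ A :=
    mul_mem ((mem_normalizer_iff.mp (hBA hb) a).mp ha) (inv_mem ha)
  have hB : b * (a * b⁻¹ * a⁻¹) ∈ B :=
    mul_mem hb ((mem_normalizer_iff.mp (hAB ha) b⁻¹).mp (inv_mem hb))
  have h1 : b * a * b⁻¹ * a⁻¹ = 1 :=
    Subgroup.disjoint_def.mp hdisj hA (by simpa only [mul_assoc] using hB)
  rw [mul_inv_eq_one, mul_inv_eq_iff_eq_mul] at h1
  exact h1

theorem Subgroup.isNilpotent_of_le {H K : Subgroup G} [Group.IsNilpotent K] (hHK : H ≤ K) :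
    Group.IsNilpotent H :=
  Group.nilpotent_of_mulEquiv (subgroupOfEquivOfLe hHK)

theorem Subgroup.isNilpotent_sup_of_le_centralizer {A B : Subgroup G} [Group.IsNilpotent A]
    [Group.IsNilpotent B] (hAB : A ≤ centralizer (B : Set G)) :
    Group.IsNilpotent ↥(A ⊔ B) := by
  have comm : ∀ (a : A) (b : B), Commute (A.subtype a) (B.subtype b) :=
    fun a b => (mem_centralizer_iff.mp (hAB a.2) b b.2).symm
  have hrange := MonoidHom.noncommCoprod_range _ _ comm
  rw [range_subtype, range_subtype] at hrange
  exact hrange ▸ Group.nilpotent_of_surjective _ (MonoidHom.rangeRestrict_surjective _)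

end

section PrimaryPart

variable {G : Type*} [Group G]

-- Defined as a closure so that it makes sense for every `H`; for finite nilpotent `H` it is the
-- unique Sylow `p`-subgroup of `H` (`mem_primaryPart_iff`).
def primaryPart (H : Subgroup G) (p : ℕ) : Subgroup G :=
  closure {g | g ∈ H ∧ ∃ k, g ^ p ^ k = 1}

theorem primaryPart_le (H : Subgroup G) (p : ℕ) : primaryPart H p ≤ H :=
  closure_le _ |>.mpr fun _ hg => hg.1

variable [Finite G] {H : Subgroup G} [Group.IsNilpotent H] {p : ℕ}

theorem mem_primaryPart_iff (hp : p.Prime) {g : G} :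
    g ∈ primaryPart H p ↔ g ∈ H ∧ ∃ k, g ^ p ^ k = 1 := by
  have := Fact.mk hp
  refine ⟨fun hg => ?_, fun hg => subset_closure hg⟩
  obtain ⟨P⟩ : Nonempty (Sylow p H) := inferInstance
  suffices hle : primaryPart H p ≤ (P : Subgroup H).map H.subtype by
    obtain ⟨u, hu, rfl⟩ := hle hg
    obtain ⟨k, hk⟩ := P.isPGroup' ⟨u, hu⟩
    exact ⟨u.2, k, by simpa using congrArg (fun v : (P : Subgroup H) => ((v : H) : G)) hk⟩
  refine closure_le _ |>.mpr fun g ⟨hgH, k, hk⟩ => ⟨⟨g, hgH⟩, ?_, rfl⟩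
  have hzp : IsPGroup p (zpowers (⟨g, hgH⟩ : H)) :=
    isPGroup_zpowers_of_pow_eq_one (k := k) (Subtype.ext (by simpa using hk))
  -- `P` is normal in the nilpotent group `H`, so it absorbs every `p`-subgroup.
  exact sup_eq_left.mp (P.is_maximal' (P.isPGroup'.to_sup_of_normal_left hzp) le_sup_left)
    (mem_zpowers _)

theorem isPGroup_primaryPart (hp : p.Prime) : IsPGroup p (primaryPart H p) :=
  fun g => (mem_primaryPart_iff hp |>.mp g.2).2.imp fun _ hk => Subtype.ext hk

theorem normalizer_le_normalizer_primaryPart (hp : p.Prime) :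
    normalizer (H : Set G) ≤ normalizer (primaryPart H p : Set G) := by
  intro y hy
  rw [mem_normalizer_iff] at hy ⊢
  intro g
  simp only [mem_primaryPart_iff hp, ← hy g, conj_pow, conj_eq_one_iff]

theorem primaryPart_normal [H.Normal] (hp : p.Prime) : (primaryPart H p).Normal :=
  normalizer_eq_top_iff.mp <| top_le_iff.mp <|
    normalizer_eq_top_iff.mpr ‹H.Normal› ▸ normalizer_le_normalizer_primaryPart hp

theorem primaryPart_le_centralizer {r : ℕ} (hp : p.Prime) (hr : r.Prime) (hpr : p ≠ r) :
    primaryPart H p ≤ centralizer (primaryPart H r : Set G) := by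
  have := Fact.mk hp
  have := Fact.mk hr
  have hN : ∀ q, q.Prime → primaryPart H q ≤ normalizer (H : Set G) :=
    fun q _ => (primaryPart_le H q).trans le_normalizer
  exact le_centralizer_of_disjoint
    ((hN p hp).trans (normalizer_le_normalizer_primaryPart hr))
    ((hN r hr).trans (normalizer_le_normalizer_primaryPart hp))
    (IsPGroup.disjoint_of_ne p r hpr _ _ (isPGroup_primaryPart hp) (isPGroup_primaryPart hr))

end PrimaryPart

section FrobeniusNC

variable {G : Type*} [Group G] {p : ℕ}

theorem frobeniusNC_iff {P : Subgroup G} :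
    FrobeniusNC p P ↔
      ∀ g ∈ normalizer (P : Set G), ∃ k, g ^ p ^ k ∈ centralizer (P : Set G) := by
  have key : ∀ (g : normalizer (P : Set G)) (k : ℕ), (QuotientGroup.mk g ^ p ^ k :
      normalizer (P : Set G) ⧸ (centralizer (P : Set G)).subgroupOf (normalizer (P : Set G))) = 1
      ↔ (g : G) ^ p ^ k ∈ centralizer (P : Set G) := fun g k => by
    rw [← QuotientGroup.mk_pow, QuotientGroup.eq_one_iff, mem_subgroupOf, coe_pow]
  refine ⟨fun hP g hg => (hP (QuotientGroup.mk ⟨g, hg⟩)).imp fun k => (key _ k).mp,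
    fun hP x => ?_⟩
  induction x using QuotientGroup.induction_on with
  | H g => exact (hP g g.2).imp fun k => (key g k).mpr

theorem mem_centralizer_of_frobeniusNC {P : Subgroup G} (hP : FrobeniusNC p P) {q k : ℕ}
    (hpq : p.Coprime q) {x : G} (hx : x ∈ normalizer (P : Set G)) (hxq : x ^ q ^ k = 1) :
    x ∈ centralizer (P : Set G) := by
  obtain ⟨j, hj⟩ := frobeniusNC_iff.mp hP x hx
  exact mem_of_pow_mem_of_coprime (hpq.pow j k) hj (hxq ▸ one_mem _)

theorem frobeniusNC_of_sup_centralizer_eq_top {P S : Subgroup G} [P.Normal] (hS : IsPGroup p S)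
    (htop : S ⊔ centralizer (P : Set G) = ⊤) : FrobeniusNC p P := by
  refine frobeniusNC_iff.mpr fun g _ => ?_
  obtain ⟨s, hs, c, hc, rfl⟩ := mem_sup_of_normal_right.mp (htop ▸ mem_top g)
  obtain ⟨k, hk⟩ := hS ⟨s, hs⟩
  refine ⟨k, ?_⟩
  rw [← QuotientGroup.eq_one_iff (N := centralizer (P : Set G)), QuotientGroup.mk_pow,
    QuotientGroup.mk_mul, (QuotientGroup.eq_one_iff c).mpr hc, mul_one, ← QuotientGroup.mk_pow,
    show s ^ p ^ k = 1 from congrArg Subtype.val hk, QuotientGroup.mk_one]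

end FrobeniusNC

section Fitting

variable {G : Type*} [Group G] [Finite G] {p : ℕ}

theorem fittingSubgroup_le_sup_centralizer (hp : p.Prime) {P : Subgroup G} [P.Normal]
    (hP : IsPGroup p P) (S : Sylow p G) :
    FittingSubgroup G ≤ (S : Subgroup G) ⊔ centralizer (P : Set G) := by
  have := Fact.mk hp
  refine iSup₂_le fun H ⟨hHn, hHnil⟩ => le_of_forall_prime_power_order_mem ?_
  intro g hg r k hr hgr
  have := Fact.mk hr
  have hgH : g ∈ primaryPart H r := (mem_primaryPart_iff hr).mpr ⟨hg, k, hgr⟩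
  have := primaryPart_normal (H := H) hr
  rcases eq_or_ne r p with rfl | hrp
  · exact mem_sup_left ((isPGroup_primaryPart hr).le_sylow_of_normal S hgH)
  · refine mem_sup_right (le_centralizer_of_disjoint ?_ ?_ ?_ hgH)
    · simp only [normalizer_eq_top_iff.mpr ‹P.Normal›, le_top]
    · simp only [normalizer_eq_top_iff.mpr ‹(primaryPart H r).Normal›, le_top]
    · exact IsPGroup.disjoint_of_ne r p hrp _ _ (isPGroup_primaryPart hr) hP

theorem le_sup_centralizer_primaryPart {U S : Subgroup G} [Group.IsNilpotent U] (hp : p.Prime)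
    (hS : primaryPart U p ≤ S) : U ≤ S ⊔ centralizer (primaryPart U p : Set G) := by
  refine le_of_forall_prime_power_order_mem fun g hg r k hr hgr => ?_
  have hgU : g ∈ primaryPart U r := (mem_primaryPart_iff hr).mpr ⟨hg, k, hgr⟩
  rcases eq_or_ne r p with rfl | hrp
  · exact mem_sup_left (hS hgU)
  · exact mem_sup_right (primaryPart_le_centralizer hr hp hrp hgU)

end Fitting

section Carter

variable {G : Type*} [Group G] [Finite G] {U : Subgroup G}

theorem frobeniusNC_primaryPart_of_normal [Group.IsNilpotent U]
    (hFU : FittingSubgroup G ⊔ U = ⊤) {p : ℕ} (hp : p.Prime) [(primaryPart U p).Normal] :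
    FrobeniusNC p (primaryPart U p) := by
  have := Fact.mk hp
  obtain ⟨S, hS⟩ := (isPGroup_primaryPart (H := U) hp).exists_le_sylow
  refine frobeniusNC_of_sup_centralizer_eq_top S.isPGroup' (top_le_iff.mp ?_)
  rw [← hFU]
  exact sup_le (fittingSubgroup_le_sup_centralizer hp (isPGroup_primaryPart hp) S)
    (le_sup_centralizer_primaryPart hp hS)

theorem IsMaximalNilpotent.mem_of_mem_normalizer (hU : IsMaximalNilpotent U)
    (hNC : ∀ p, p.Prime → FrobeniusNC p (primaryPart U p)) {x : G}
    (hx : x ∈ normalizer (U : Set G)) {q k : ℕ} (hq : q.Prime) (hxq : x ^ q ^ k = 1) :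
    x ∈ U := by
  have := hU.1
  have := Fact.mk hq
  set R := zpowers x ⊔ primaryPart U q
  have hR : IsPGroup q R := (isPGroup_zpowers_of_pow_eq_one hxq).to_sup_of_normal_right'
    (isPGroup_primaryPart hq) (zpowers_le.mpr (normalizer_le_normalizer_primaryPart hq hx))
  set V := U ⊓ centralizer (R : Set G)
  have := hR.isNilpotent
  have := isNilpotent_of_le (inf_le_left : V ≤ U)
  have hK := isNilpotent_sup_of_le_centralizer (le_centralizer_iff.mpr (inf_le_right : V ≤ _))
  have hUK : U ≤ R ⊔ V := by
    refine le_of_forall_prime_power_order_mem fun g hg r j hr hgr => ?_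
    have hgU : g ∈ primaryPart U r := (mem_primaryPart_iff hr).mpr ⟨hg, j, hgr⟩
    rcases eq_or_ne r q with rfl | hrq
    · exact mem_sup_left (mem_sup_right hgU)
    · refine mem_sup_right ⟨hg, le_centralizer_iff.mp ?_ hgU⟩
      refine sup_le (zpowers_le.mpr ?_) (primaryPart_le_centralizer hq hr hrq.symm)
      exact mem_centralizer_of_frobeniusNC (hNC r hr) ((Nat.coprime_primes hr hq).mpr hrq)
        (normalizer_le_normalizer_primaryPart hr hx) hxq
  rw [← hU.2 _ hK hUK]
  exact mem_sup_left (mem_sup_left (mem_zpowers x))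

end Carter

theorem maximal_nilpotent_is_carter_of_frobenius_nonnormal
    (G : Type*) [Group G] [Finite G]
    (h : ∀ (p : ℕ) (P : Subgroup G), p.Prime → IsPGroup p P → ¬P.Normal → FrobeniusNC p P) :
    ∀ U : Subgroup G, IsMaximalNilpotent U → FittingSubgroup G ⊔ U = ⊤ →
      IsCarterSubgroup U := by
  intro U hU hFU
  have := hU.1
  have hNC : ∀ p, p.Prime → FrobeniusNC p (primaryPart U p) := fun p hp => by
    by_cases hn : (primaryPart U p).Normal
    · exact frobeniusNC_primaryPart_of_normal hFU hp
    · exact h p _ hp (isPGroup_primaryPart hp) hn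
  refine ⟨hU.1, le_antisymm ?_ le_normalizer⟩
  exact le_of_forall_prime_power_order_mem fun x hx q k hq hxq =>
    hU.mem_of_mem_normalizer hNC hx hq hxq
end

section
/- Let G be a finite non-nilpotent group in which every non-subnormal primary subgroup satisfies the Frobenius normalizer condition, and let E be a nilpotent subgroup of G with F_0(G) ∩ E = 1 and F_0(G)E = G. Then the normalizer N_G(E) is a Carter subgroup of G. -/
open Subgroup

/-! Write `F = F_0(G)`. Every prime dividing `|F|` has a normal Sylow subgroup in `G`, and that
Sylow subgroup lies in `F`; hence `F` is a nilpotent normal Hall subgroup and `|F|`, `|E|` are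
coprime. For `N = N_G(E)` the Dedekind law gives `N = (N ∩ F) E`, and `[N ∩ F, E] ≤ F ∩ E = 1`,
so `N` is a product of two commuting nilpotent subgroups. If `g = f e` normalizes `N` and `x ∈ E`,
then `c = [f, x] ∈ N ∩ F` commutes with `x`, whence `c ^ |E| = 1` and `c = 1`: thus `f`
centralizes `E` and `g ∈ N`. -/

namespace Subgroup

variable {G : Type*} [Group G]

theorem card_sup_dvd_of_normal (H K : Subgroup G) [K.Normal] :
    Nat.card ↥(H ⊔ K) ∣ Nat.card H * Nat.card K := by
  rw [← (K.subgroupOf (H ⊔ K)).card_mul_index,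
    Nat.card_congr (subgroupOfEquivOfLe le_sup_right).toEquiv, mul_comm (Nat.card H)]
  have hrel : K.relIndex (H ⊔ K) ∣ Nat.card H := relIndex_sup_right H K ▸ relIndex_dvd_card K H
  exact mul_dvd_mul_left _ hrel

theorem index_eq_card_of_inf_eq_bot_of_sup_eq_top {F E : Subgroup G} [F.Normal]
    (hinf : F ⊓ E = ⊥) (hsup : F ⊔ E = ⊤) : F.index = Nat.card E := by
  rw [← relIndex_top_right, ← hsup, sup_comm, relIndex_sup_right, ← inf_relIndex_right, hinf,
    relIndex_bot_left]

theorem inf_normalizer_le_centralizer {F E : Subgroup G} [hF : F.Normal] (hinf : F ⊓ E = ⊥) :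
    F ⊓ normalizer (E : Set G) ≤ centralizer (E : Set G) := by
  intro f hf
  obtain ⟨hfF, hfN⟩ := mem_inf.mp hf
  rw [mem_centralizer_iff]
  intro e he
  have hcomm : f * e * f⁻¹ * e⁻¹ ∈ F ⊓ E := mem_inf.mpr
    ⟨by simpa only [mul_assoc] using mul_mem hfF (hF.conj_mem _ (inv_mem hfF) e),
      mul_mem ((mem_normalizer_iff.mp hfN e).mp he) (inv_mem he)⟩
  rwa [hinf, mem_bot, mul_inv_eq_one, mul_inv_eq_iff_eq_mul, eq_comm] at hcomm

theorem inf_sup_eq_of_le_of_sup_eq_top {F E M : Subgroup G} [F.Normal] (hEM : E ≤ M)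
    (hsup : F ⊔ E = ⊤) : M ⊓ F ⊔ E = M := by
  refine le_antisymm (sup_le inf_le_left hEM) fun g hg => ?_
  obtain ⟨f, hf, e, he, rfl⟩ := mem_sup_of_normal_left.mp (hsup ▸ mem_top g : g ∈ F ⊔ E)
  have hfM : f ∈ M := by simpa using mul_mem hg (hEM (inv_mem he))
  exact mul_mem (mem_sup_left ⟨hfM, hf⟩) (mem_sup_right he)

theorem isNilpotent_sup_of_le_centralizer_s5 {H K : Subgroup G} [Group.IsNilpotent H]
    [Group.IsNilpotent K] (hHK : H ≤ centralizer (K : Set G)) : Group.IsNilpotent ↥(H ⊔ K) := by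
  have hcomm : ∀ (h : H) (k : K), Commute (H.subtype h) (K.subtype k) :=
    fun h k => ((mem_centralizer_iff.mp (hHK h.2)) k k.2).symm
  have hrange := MonoidHom.noncommCoprod_range H.subtype K.subtype hcomm
  rw [range_subtype, range_subtype] at hrange
  rw [← hrange]
  exact Group.nilpotent_of_surjective _ (MonoidHom.rangeRestrict_surjective _)

theorem normalizer_normalizer_eq_of_coprime {F E : Subgroup G} [hF : F.Normal]
    (hcop : (Nat.card F).Coprime (Nat.card E)) (hinf : F ⊓ E = ⊥) (hsup : F ⊔ E = ⊤) :
    normalizer (normalizer (E : Set G) : Set G) = normalizer (E : Set G) := by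
  set N := normalizer (E : Set G)
  have hEN : E ≤ N := le_normalizer
  refine le_antisymm (fun g hg => ?_) le_normalizer
  obtain ⟨f, hf, e, he, rfl⟩ := mem_sup_of_normal_left.mp (hsup ▸ mem_top g : g ∈ F ⊔ E)
  have hfN : f ∈ normalizer (N : Set G) := by
    simpa using mul_mem hg (le_normalizer (hEN (inv_mem he)))
  suffices f ∈ centralizer (E : Set G) from mul_mem (centralizer_le_normalizer _ this) (hEN he)
  rw [mem_centralizer_iff]
  intro x hx
  set c := f * x * f⁻¹ * x⁻¹ with hc
  have hcF : c ∈ F := by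
    rw [hc]; simpa only [mul_assoc] using mul_mem hf (hF.conj_mem _ (inv_mem hf) x)
  have hcN : c ∈ N := mul_mem ((mem_normalizer_iff.mp hfN x).mp (hEN hx)) (inv_mem (hEN hx))
  have hcx : Commute c x :=
    (mem_centralizer_iff.mp (inf_normalizer_le_centralizer hinf (mem_inf.mpr ⟨hcF, hcN⟩)) x hx).symm
  have hxn : x ^ Nat.card E = 1 := orderOf_dvd_iff_pow_eq_one.mp (E.orderOf_dvd_natCard hx)
  have hpow : c ^ Nat.card E = 1 :=
    calc c ^ Nat.card E = (c * x) ^ Nat.card E := by rw [hcx.mul_pow, hxn, mul_one]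
      _ = f * x ^ Nat.card E * f⁻¹ := by rw [show c * x = f * x * f⁻¹ by rw [hc]; group, conj_pow]
      _ = 1 := by rw [hxn]; group
  have hc1 : c = 1 := orderOf_eq_one_iff.mp <| Nat.eq_one_of_dvd_coprimes hcop
    (F.orderOf_dvd_natCard hcF) (orderOf_dvd_of_pow_eq_one hpow)
  rwa [hc, mul_inv_eq_one, mul_inv_eq_iff_eq_mul, eq_comm] at hc1

theorem isCarterSubgroup_normalizer_of_coprime {F E : Subgroup G} [F.Normal]
    [Group.IsNilpotent F] [Group.IsNilpotent E] (hcop : (Nat.card F).Coprime (Nat.card E))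
    (hinf : F ⊓ E = ⊥) (hsup : F ⊔ E = ⊤) : IsCarterSubgroup (normalizer (E : Set G)) := by
  set N := normalizer (E : Set G)
  have : Group.IsNilpotent ↥(N ⊓ F) :=
    Group.nilpotent_of_mulEquiv (subgroupOfEquivOfLe (inf_le_right : N ⊓ F ≤ F))
  have hcent : N ⊓ F ≤ centralizer (E : Set G) := inf_comm N F ▸ inf_normalizer_le_centralizer hinf
  refine ⟨?_, normalizer_normalizer_eq_of_coprime hcop hinf hsup⟩
  rw [← inf_sup_eq_of_le_of_sup_eq_top (M := N) le_normalizer hsup]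
  exact isNilpotent_sup_of_le_centralizer_s5 hcent

end Subgroup

theorem SupClosed.iSup_mem_of_finite {α : Type*} {ι : Sort*} [CompleteLattice α] [Finite α]
    {s : Set α} {f : ι → α} (hs : SupClosed s) (hbot : ⊥ ∈ s) (hf : ∀ i, f i ∈ s) :
    ⨆ i, f i ∈ s := by
  rw [← sSup_range]
  exact hs.sSup_mem (Set.toFinite _) hbot (Set.range_subset_iff.mpr hf)

section NormalSylowProduct

variable {G : Type*} [Group G]

theorem le_normalSylowProduct {p : ℕ} [hp : Fact p.Prime] (P : Sylow p G)
    (hP : (P : Subgroup G).Normal) : (P : Subgroup G) ≤ normalSylowProduct G :=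
  le_iSup_of_le p <| le_iSup_of_le hp.out <| le_iSup_of_le P <| le_iSup_of_le hP le_rfl

variable [Finite G]

theorem exists_normal_sylow_of_dvd_card_normalSylowProduct {q : ℕ} (hq : q.Prime)
    (hdvd : q ∣ Nat.card (normalSylowProduct G)) : ∃ Q : Sylow q G, (Q : Subgroup G).Normal := by
  let s : Set (Subgroup G) := {H | H.Normal ∧
    ∀ q : ℕ, q.Prime → q ∣ Nat.card H → ∃ Q : Sylow q G, (Q : Subgroup G).Normal}
  have hs : SupClosed s := by
    rintro H ⟨hH, hHq⟩ K ⟨hK, hKq⟩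
    refine ⟨sup_normal H K, fun q hq hdvd => ?_⟩
    rcases hq.dvd_mul.mp (hdvd.trans (H.card_sup_dvd_of_normal K)) with h | h
    exacts [hHq q hq h, hKq q hq h]
  have hbot : ⊥ ∈ s :=
    ⟨normal_bot, fun q hq h => absurd (Nat.dvd_one.mp (card_bot (G := G) ▸ h)) hq.ne_one⟩
  have hsylow (p : ℕ) (hp : p.Prime) (P : Sylow p G) (hP : (P : Subgroup G).Normal) :
      (P : Subgroup G) ∈ s := by
    refine ⟨hP, fun q hq hdvd => ?_⟩
    have := Fact.mk hp
    obtain ⟨n, hn⟩ := IsPGroup.iff_card.mp P.isPGroup'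
    rw [(Nat.prime_dvd_prime_iff_eq hq hp).mp (hq.dvd_of_dvd_pow (hn ▸ hdvd))]
    exact ⟨P, hP⟩
  have hF : normalSylowProduct G ∈ s :=
    hs.iSup_mem_of_finite hbot fun p => hs.iSup_mem_of_finite hbot fun hp =>
      hs.iSup_mem_of_finite hbot fun P => hs.iSup_mem_of_finite hbot fun hP => hsylow p hp P hP
  exact hF.2 q hq hdvd

theorem coprime_card_index_normalSylowProduct :
    (Nat.card (normalSylowProduct G)).Coprime (normalSylowProduct G).index := by
  refine Nat.coprime_of_dvd fun q hq hdvd hidx => ?_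
  obtain ⟨Q, hQ⟩ := exists_normal_sylow_of_dvd_card_normalSylowProduct hq hdvd
  have := Fact.mk hq
  exact Q.not_dvd_index (hidx.trans (index_dvd_of_le (le_normalSylowProduct Q hQ)))

theorem isNilpotent_normalSylowProduct : Group.IsNilpotent (normalSylowProduct G) := by
  refine (Group.isNilpotent_of_finite_tfae.out 0 3).mpr ?_
  intro q _ S
  by_cases hdvd : q ∣ Nat.card (normalSylowProduct G)
  · obtain ⟨Q, hQ⟩ := exists_normal_sylow_of_dvd_card_normalSylowProduct Fact.out hdvd
    let Q' := Q.subtype (le_normalSylowProduct Q hQ)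
    have hQ' : (Q' : Subgroup (normalSylowProduct G)).Normal := by
      rw [Sylow.coe_subtype]; infer_instance
    have := Sylow.unique_of_normal Q' hQ'
    rwa [Subsingleton.elim S Q']
  · rw [eq_bot_of_card_eq (S : Subgroup (normalSylowProduct G)) (by
      rw [S.card_eq_multiplicity, Nat.factorization_eq_zero_of_not_dvd hdvd, pow_zero])]
    exact normal_bot

end NormalSylowProduct

theorem normalizer_complement_is_carter_of_frobenius_nonsubnormal_general
    (G : Type*) [Group G] [Finite G]
    (E : Subgroup G) (hE : Group.IsNilpotent E)
    (hEinf : normalSylowProduct G ⊓ E = ⊥)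
    (hEsup : normalSylowProduct G ⊔ E = ⊤) :
    IsCarterSubgroup (Subgroup.normalizer (E : Set G)) := by
  have := isNilpotent_normalSylowProduct (G := G)
  have hcop := coprime_card_index_normalSylowProduct (G := G)
  rw [Subgroup.index_eq_card_of_inf_eq_bot_of_sup_eq_top hEinf hEsup] at hcop
  exact Subgroup.isCarterSubgroup_normalizer_of_coprime hcop hEinf hEsup

theorem normalizer_complement_is_carter_of_frobenius_nonsubnormal
    (G : Type*) [Group G] [Finite G] (hnil : ¬Group.IsNilpotent G)
    (h : ∀ (p : ℕ) (P : Subgroup G), p.Prime → IsPGroup p P → ¬_root_.IsSubnormal P → FrobeniusNC p P)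
    (E : Subgroup G) (hE : Group.IsNilpotent E)
    (hEinf : normalSylowProduct G ⊓ E = ⊥)
    (hEsup : normalSylowProduct G ⊔ E = ⊤) :
    IsCarterSubgroup (Subgroup.normalizer (E : Set G)) :=
  normalizer_complement_is_carter_of_frobenius_nonsubnormal_general G E hE hEinf hEsup
end

section
/- Let G be a finite group, let F_0 be the product of all normal Sylow subgroups of G, and suppose there exists a nilpotent subgroup E of G with F_0 ∩ E = 1 and F_0 E = G. Then every non-subnormal primary subgroup of G satisfies the Frobenius normalizer condition in G. -/
open Subgroup

/-!
A `p`-subgroup lying in a normal Sylow `p`-subgroup is subnormal, because every subgroup of a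
nilpotent group is. So for non-subnormal `P` no Sylow `p`-subgroup is normal, `F₀` is a product
of normal `p'`-subgroups, and `P ∩ F₀ = 1`. Since `G/F₀` is an image of the nilpotent group `E`, a `q`-element `z` of `N_G(P)`
with `q ≠ p` and any `g ∈ P` have commuting images in `G/F₀`; hence `[z, g] ∈ P ∩ F₀ = 1`.
So every element of prime power order prime to `p` in `N_G(P)` centralizes `P`, and this forces
`N_G(P)/C_G(P)` to be a `p`-group.
-/

open scoped commutatorElement

namespace Subgroup

variable {G : Type*} [Group G]

theorem IsSubnormal.of_isNilpotent [Finite G] [Group.IsNilpotent G] (H : Subgroup G) :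
    H.IsSubnormal := by
  induction H using WellFoundedGT.induction with
  | _ H ih =>
  by_cases hH : H = ⊤
  · exact hH ▸ .top
  · exact .step H _ le_normalizer
      (ih _ (Group.normalizerCondition_of_isNilpotent H (lt_top_iff_ne_top.mpr hH)))
      normal_in_normalizer

theorem IsSubnormal.isSubnormal {H : Subgroup G} (h : H.IsSubnormal) : _root_.IsSubnormal H := by
  obtain ⟨n, f, hf, hnormal, h0, hn⟩ := IsSubnormal.isSubnormal_iff.mp h
  exact ⟨n, f, h0, hn, fun i _ => ⟨hf i.le_succ, hnormal i⟩⟩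

theorem card_sup_dvd_card_mul_card (A B : Subgroup G) [B.Normal] :
    Nat.card ↥(A ⊔ B) ∣ Nat.card A * Nat.card B := by
  rw [card_eq_card_quotient_mul_card_subgroup (B.subgroupOf (A ⊔ B)),
    ← Nat.card_congr (QuotientGroup.quotientInfEquivProdNormalQuotient A B).toEquiv,
    Nat.card_congr (subgroupOfEquivOfLe le_sup_right).toEquiv]
  exact Nat.mul_dvd_mul_right (card_quotient_dvd_card _) _

theorem normal_and_not_dvd_card_sSup [Finite G] {p : ℕ} (hp : p.Prime) {s : Set (Subgroup G)}
    (hs : ∀ H ∈ s, H.Normal ∧ ¬ p ∣ Nat.card H) :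
    (sSup s).Normal ∧ ¬ p ∣ Nat.card ↥(sSup s) := by
  induction s, s.toFinite using Set.Finite.induction_on with
  | empty => simpa using hp.ne_one
  | @insert H s _ _ ih =>
    obtain ⟨hHn, hHp⟩ := hs H (s.mem_insert H)
    obtain ⟨hsn, hsp⟩ := ih fun K hK => hs K (Set.mem_insert_of_mem H hK)
    rw [sSup_insert]
    refine ⟨inferInstance, fun hdvd => ?_⟩
    rcases hp.dvd_mul.mp (hdvd.trans (card_sup_dvd_card_mul_card H (sSup s))) with h | h
    exacts [hHp h, hsp h]

theorem isNilpotent_quotient_of_sup_eq_top {N E : Subgroup G} [N.Normal] [Group.IsNilpotent E]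
    (h : N ⊔ E = ⊤) : Group.IsNilpotent (G ⧸ N) := by
  refine Group.nilpotent_of_surjective ((QuotientGroup.mk' N).comp E.subtype) ?_
  rw [← MonoidHom.range_eq_top, MonoidHom.range_comp, range_subtype, ← bot_sup_eq (E.map _),
    ← QuotientGroup.map_mk'_self N, ← map_sup, h, ← MonoidHom.range_eq_map,
    QuotientGroup.range_mk']

end Subgroup

namespace IsPGroup

variable {G : Type*} [Group G] {p : ℕ}

theorem isSubnormal_of_sylow_normal [Finite G] [Fact p.Prime] {P : Subgroup G}
    (hP : IsPGroup p P) (S : Sylow p G) (hS : (S : Subgroup G).Normal) : P.IsSubnormal := by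
  obtain ⟨R, hPR⟩ := hP.exists_le_sylow
  have : Subsingleton (Sylow p G) := (Sylow.unique_of_normal S hS).instSubsingleton
  have : Group.IsNilpotent S := S.isPGroup'.isNilpotent
  rw [Subsingleton.elim R S] at hPR
  exact .trans hPR (.of_isNilpotent _) hS.isSubnormal

theorem zpowers_of_pow_eq_one {x : G} {k : ℕ} (hx : x ^ p ^ k = 1) :
    IsPGroup p (zpowers x) :=
  of_card_dvd_pow (Nat.card_zpowers x ▸ orderOf_dvd_of_pow_eq_one hx)

theorem quotient_of_forall_pow_prime_pow_eq_one_mem [Finite G] [Fact p.Prime]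
    (K : Subgroup G) [K.Normal]
    (h : ∀ (q k : ℕ) (g : G), q.Prime → q ≠ p → g ^ q ^ k = 1 → g ∈ K) :
    IsPGroup p (G ⧸ K) := by
  refine iff_orderOf.mpr fun x => ?_
  obtain ⟨g, rfl⟩ := QuotientGroup.mk_surjective x
  refine ⟨_, Nat.eq_prime_pow_of_unique_prime_dvd (orderOf_pos _).ne' fun {q} hq hqx => ?_⟩
  by_contra hqp
  set n := orderOf g
  -- the `q`-part of `g` lies in `K`, although `q` does not divide the order of its image
  have hgK : g ^ (n / q ^ n.factorization q) ∈ K := by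
    refine h q (n.factorization q) _ hq hqp ?_
    rw [← pow_mul, Nat.div_mul_cancel (Nat.ordProj_dvd n q), pow_orderOf_eq_one]
  rw [← QuotientGroup.eq_one_iff, QuotientGroup.mk_pow, ← orderOf_dvd_iff_pow_eq_one] at hgK
  exact Nat.not_dvd_ordCompl hq (orderOf_pos g).ne' (hqx.trans hgK)

end IsPGroup

section

variable {G : Type*} [Group G]

theorem not_dvd_card_normalSylowProduct [Finite G] {p : ℕ} (hp : p.Prime)
    (hno : ∀ S : Sylow p G, ¬ (S : Subgroup G).Normal) :
    ¬ p ∣ Nat.card (normalSylowProduct G) := by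
  have hle : normalSylowProduct G ≤ sSup {H : Subgroup G | H.Normal ∧ ¬ p ∣ Nat.card H} := by
    refine iSup₂_le fun q hq => iSup₂_le fun S hS => le_sSup ⟨hS, fun hdvd => ?_⟩
    have : Fact q.Prime := ⟨hq⟩
    obtain ⟨k, hk⟩ := IsPGroup.iff_card.mp S.isPGroup'
    rw [hk] at hdvd
    obtain rfl := (Nat.prime_dvd_prime_iff_eq hp hq).mp (hp.dvd_of_dvd_pow hdvd)
    exact hno S hS
  exact fun h => (normal_and_not_dvd_card_sSup hp fun _ => id).2 (h.trans (card_dvd_of_le hle))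

theorem commute_of_pow_prime_pow_eq_one_of_isNilpotent [Finite G] [Group.IsNilpotent G]
    {p q : ℕ} [Fact p.Prime] [Fact q.Prime] (hpq : p ≠ q) {x y : G} {a b : ℕ}
    (hx : x ^ p ^ a = 1) (hy : y ^ q ^ b = 1) : Commute x y := by
  obtain ⟨R, hR⟩ := (IsPGroup.zpowers_of_pow_eq_one hx).exists_le_sylow
  obtain ⟨S, hS⟩ := (IsPGroup.zpowers_of_pow_eq_one hy).exists_le_sylow
  have hnc := Group.normalizerCondition_of_isNilpotent (G := G)
  exact commute_of_normal_of_disjoint _ _ (R.normal_of_normalizerCondition hnc)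
    (S.normal_of_normalizerCondition hnc) (R.isPGroup'.disjoint_of_ne p q hpq _ _ S.isPGroup')
    x y (hR (mem_zpowers x)) (hS (mem_zpowers y))

theorem mem_centralizer_of_mem_normalizer_of_pow_eq_one [Finite G] {p q : ℕ} [Fact p.Prime]
    [Fact q.Prime] (hqp : q ≠ p) {P F : Subgroup G} [F.Normal] [Group.IsNilpotent (G ⧸ F)]
    (hP : IsPGroup p P) (hPF : Disjoint P F) {z : G} (hz : z ∈ normalizer (P : Set G)) {b : ℕ}
    (hzq : z ^ q ^ b = 1) : z ∈ centralizer (P : Set G) := by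
  refine mem_centralizer_iff.mpr fun g hg => ?_
  obtain ⟨k, hk⟩ := hP ⟨g, hg⟩
  have hgp : g ^ p ^ k = 1 := by simpa using congrArg Subtype.val hk
  have hcP : ⁅z, g⁆ ∈ P := mul_mem ((mem_normalizer_iff.mp hz g).mp hg) (inv_mem hg)
  have hcF : ⁅z, g⁆ ∈ F := by
    rw [← QuotientGroup.eq_one_iff, ← QuotientGroup.mk'_apply, map_commutatorElement,
      commutatorElement_eq_one_iff_commute]
    refine commute_of_pow_prime_pow_eq_one_of_isNilpotent hqp (a := b) (b := k) ?_ ?_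
    · rw [← map_pow, hzq, map_one]
    · rw [← map_pow, hgp, map_one]
  exact (commutatorElement_eq_one_iff_commute.mp (disjoint_def.mp hPF hcP hcF)).symm.eq

end

theorem frobenius_nonsubnormal_of_nilpotent_complement
    (G : Type*) [Group G] [Finite G]
    (h : ∃ E : Subgroup G, Group.IsNilpotent E ∧ normalSylowProduct G ⊓ E = ⊥ ∧
      normalSylowProduct G ⊔ E = ⊤) :
    ∀ (p : ℕ) (P : Subgroup G), p.Prime → IsPGroup p P → ¬_root_.IsSubnormal P →
      FrobeniusNC p P := by
  intro p P hp hP hns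
  have : Fact p.Prime := ⟨hp⟩
  obtain ⟨E, hE, -, hsup⟩ := h
  have := isNilpotent_quotient_of_sup_eq_top hsup
  have hno : ∀ S : Sylow p G, ¬ (S : Subgroup G).Normal :=
    fun S hS => hns (hP.isSubnormal_of_sylow_normal S hS).isSubnormal
  have hPF : Disjoint P (normalSylowProduct G) := by
    obtain ⟨k, hk⟩ := IsPGroup.iff_card.mp hP
    refine disjoint_of_coprime_natCard ?_
    rw [hk]
    exact .pow_left k (hp.coprime_iff_not_dvd.mpr (not_dvd_card_normalSylowProduct hp hno))
  refine IsPGroup.quotient_of_forall_pow_prime_pow_eq_one_mem _ fun q k g hq hqp hg => ?_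
  have : Fact q.Prime := ⟨hq⟩
  exact mem_subgroupOf.mpr (mem_centralizer_of_mem_normalizer_of_pow_eq_one hqp hP hPF g.2
    (by simpa using congrArg Subtype.val hg))
end

section
/- If G is a finite semi-nilpotent group, then F(G) is a maximal nilpotent subgroup of G. -/
open Subgroup

/-- A group is semi-nilpotent if the normalizer of every non-normal nilpotent subgroup
is nilpotent. -/
def SemiNilpotent (G : Type*) [Group G] : Prop :=
  ∀ U : Subgroup G, Group.IsNilpotent U → ¬U.Normal → Group.IsNilpotent (Subgroup.normalizer (U : Set G))

/-!
`F(G)` is nilpotent because it lies in the product of the `p`-cores `O_p(G)`, which centralize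
each other. Suppose a maximal nilpotent `W ⊇ F(G)` is not normal. Then no maximal nilpotent
subgroup is normal, so by semi-nilpotency all of them are self-normalizing; and two distinct ones
meet inside `F(G)`: for a maximal counterexample `D = V₁ ∩ V₂`, the normalizer condition lets the
nilpotent `N(D)` grow `D` inside both `V₁` and `V₂`, so the maximal nilpotent subgroup containing
`N(D)` is both `V₁` and `V₂`. Counting elements outside `F(G)`: the conjugates of a maximal
nilpotent `V ⊄ F(G)` contain `|G : V| · |V \ F(G)| ≥ |G| / 2` of them, disjoint from those of any
other conjugacy class. For `V = W` the count is `|G| - |G : W| · |F(G)| < |G| - |F(G)|`, so another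
class exists, and two classes give more than `|G| - |F(G)|` elements.
-/

open scoped Pointwise

namespace Subgroup

variable {G : Type*} [Group G] {H K : Subgroup G} {g x : G}

theorem mem_conj_smul_iff : x ∈ MulAut.conj g • H ↔ g⁻¹ * x * g ∈ H := by
  rw [mem_pointwise_smul_iff_inv_smul_mem, ← map_inv, MulAut.smul_def, MulAut.conj_apply, inv_inv]

theorem conj_mem_conj_smul_iff : g * x * g⁻¹ ∈ MulAut.conj g • H ↔ x ∈ H := by
  simp [mem_conj_smul_iff, mul_assoc]

theorem conj_smul_eq_self_iff : MulAut.conj g • H = H ↔ g ∈ normalizer (H : Set G) := by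
  rw [mem_normalizer_iff_map_conj_eq]; rfl

theorem ncard_coe (H : Subgroup G) : (H : Set G).ncard = Nat.card H :=
  (Nat.card_coe_set_eq _).symm

theorem two_mul_card_le_of_lt [Finite G] (h : H < K) : 2 * Nat.card H ≤ Nat.card K := by
  obtain ⟨k, hk⟩ := card_dvd_of_le h.le
  have hne : Nat.card H ≠ Nat.card K := fun hEq => h.ne (eq_of_le_of_card_ge h.le hEq.ge)
  have hK : 0 < Nat.card K := Nat.card_pos
  rcases k with _ | _ | k
  · omega
  · omega
  · rw [hk]; nlinarith

theorem isNilpotent_of_le_s9 (hK : Group.IsNilpotent K) (hHK : H ≤ K) : Group.IsNilpotent H :=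
  (Group.isNilpotent_congr (subgroupOfEquivOfLe hHK)).mp inferInstance

theorem lt_normalizer_inf_of_isNilpotent (hK : Group.IsNilpotent K) (hHK : H < K) :
    H < normalizer (H : Set G) ⊓ K := by
  have hlt : H.subgroupOf K < normalizer (H.subgroupOf K : Set K) :=
    Group.normalizerCondition_of_isNilpotent _
      (lt_top_iff_ne_top.2 fun h => hHK.not_ge (subgroupOf_eq_top.1 h))
  rw [← subgroupOf_normalizer_eq hHK.le] at hlt
  simpa [subgroupOf_map_subtype, inf_of_le_left hHK.le] using
    (map_lt_map_iff_of_injective K.subtype_injective).2 hlt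

theorem eq_top_of_forall_exists_sylow_le [Finite G]
    (h : ∀ p ∈ (Nat.card G).primeFactors, ∃ P : Sylow p G, ↑P ≤ K) : K = ⊤ := by
  rw [← index_eq_one]
  by_contra hK
  obtain ⟨p, hp, hpK⟩ := Nat.exists_prime_and_dvd hK
  have : Fact p.Prime := ⟨hp⟩
  obtain ⟨P, hPK⟩ :=
    h p (Nat.mem_primeFactors.2 ⟨hp, hpK.trans K.index_dvd_card, Nat.card_pos.ne'⟩)
  exact P.not_dvd_index (hpK.trans (index_dvd_of_le hPK))

end Subgroup

section Fitting

variable {G : Type*} [Group G]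

def pCore (G : Type*) [Group G] (p : ℕ) : Subgroup G :=
  sSup {P | P.Normal ∧ IsPGroup p P}

theorem le_pCore {p : ℕ} {P : Subgroup G} (hn : P.Normal) (hp : IsPGroup p P) : P ≤ pCore G p :=
  le_sSup ⟨hn, hp⟩

instance pCore_normal (p : ℕ) : (pCore G p).Normal :=
  sSup_normal _ fun _ hP => hP.1

theorem isPGroup_pCore (p : ℕ) : IsPGroup p (pCore G p) :=
  Sylow.sSup_of_normal _ (fun _ hP => hP.2) fun _ hP => hP.1

theorem isNilpotent_iSup_pCore [Finite G] :
    Group.IsNilpotent ↥(⨆ p : (Nat.card G).primeFactors, pCore G p) := by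
  have hprime (p : (Nat.card G).primeFactors) : Fact (p : ℕ).Prime :=
    ⟨Nat.prime_of_mem_primeFactors p.2⟩
  have hcomm : Pairwise fun p q : (Nat.card G).primeFactors =>
      ∀ x y : G, x ∈ pCore G p → y ∈ pCore G q → Commute x y := fun p q hpq =>
    commute_of_normal_of_disjoint _ _ (pCore_normal _) (pCore_normal _)
      (IsPGroup.disjoint_of_ne p q (Subtype.coe_injective.ne hpq) _ _
        (isPGroup_pCore _) (isPGroup_pCore _))
  have (p : (Nat.card G).primeFactors) : Group.IsNilpotent (pCore G p) :=
    (isPGroup_pCore _).isNilpotent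
  rw [← noncommPiCoprod_range (hcomm := hcomm)]
  exact Group.nilpotent_of_surjective _ (noncommPiCoprod hcomm).rangeRestrict_surjective

theorem le_iSup_pCore_of_normal [Finite G] {H : Subgroup G} (hn : H.Normal)
    (hnil : Group.IsNilpotent H) : H ≤ ⨆ p : (Nat.card G).primeFactors, pCore G p := by
  rw [← subgroupOf_eq_top]
  refine eq_top_of_forall_exists_sylow_le fun p hp => ?_
  have : Fact p.Prime := ⟨Nat.prime_of_mem_primeFactors hp⟩
  let P : Sylow p H := default
  have : (P : Subgroup H).Characteristic := P.characteristic_of_normal inferInstance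
  have hpG : p ∈ (Nat.card G).primeFactors :=
    Nat.primeFactors_mono H.card_subgroup_dvd_card Nat.card_pos.ne' hp
  refine ⟨P, map_le_iff_le_comap.1 ?_⟩
  exact (le_pCore inferInstance (P.isPGroup'.map _)).trans
    (le_iSup (fun q : (Nat.card G).primeFactors => pCore G q) ⟨p, hpG⟩)

theorem le_fittingSubgroup {H : Subgroup G} (hn : H.Normal) (hnil : Group.IsNilpotent H) :
    H ≤ FittingSubgroup G :=
  le_iSup₂_of_le H ⟨hn, hnil⟩ le_rfl

theorem fittingSubgroup_isNilpotent [Finite G] : Group.IsNilpotent (FittingSubgroup G) :=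
  isNilpotent_of_le_s9 isNilpotent_iSup_pCore <|
    iSup₂_le fun _ hH => le_iSup_pCore_of_normal hH.1 hH.2

end Fitting

section MaximalNilpotent

variable {G : Type*} [Group G] {V W : Subgroup G}

theorem IsMaximalNilpotent.not_le (hV : IsMaximalNilpotent V) (hW : IsMaximalNilpotent W)
    (hne : V ≠ W) : ¬V ≤ W :=
  fun hle => hne (hV.2 W hW.1 hle).symm

theorem IsMaximalNilpotent.conj_smul (hV : IsMaximalNilpotent V) (g : G) :
    IsMaximalNilpotent (MulAut.conj g • V) := by
  refine ⟨(Group.isNilpotent_congr (equivSMul _ V)).mp hV.1, fun U hU hle => ?_⟩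
  have := hV.2 _ ((Group.isNilpotent_congr (equivSMul (MulAut.conj g)⁻¹ U)).mp hU)
    (pointwise_smul_subset_iff.1 hle)
  rw [← this, smul_inv_smul]

theorem exists_isMaximalNilpotent_ge [Finite G] (hV : Group.IsNilpotent V) :
    ∃ M, V ≤ M ∧ IsMaximalNilpotent M := by
  obtain ⟨M, hVM, hM⟩ :=
    Finite.exists_le_maximal (p := fun U : Subgroup G => Group.IsNilpotent U) hV
  exact ⟨M, hVM, hM.prop, fun U hU hMU => (hM.2 hU hMU).antisymm hMU⟩

theorem exists_isMaximalNilpotent_mem [Finite G] (x : G) :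
    ∃ M, IsMaximalNilpotent M ∧ x ∈ M := by
  let : CommGroup (zpowers x) := IsCyclic.commGroup
  obtain ⟨M, hxM, hM⟩ := exists_isMaximalNilpotent_ge (CommGroup.isNilpotent (G := zpowers x))
  exact ⟨M, hM, hxM (mem_zpowers x)⟩

end MaximalNilpotent

section Counting

variable {G : Type*} [Group G] {F V W : Subgroup G}

def conjugatesDiff (V F : Subgroup G) : Set G :=
  (⋃ g : G, ((MulAut.conj g • V : Subgroup G) : Set G)) \ F

theorem conjugatesDiff_subset_compl : conjugatesDiff V F ⊆ (F : Set G)ᶜ :=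
  fun _ hx => hx.2

/-- `hTI` says at once that `V` is self-normalizing and that distinct conjugates of `V` meet
inside `F`. -/
theorem ncard_conjugatesDiff (hF : F.Normal) (hTI : ∀ g ∉ V, MulAut.conj g • V ⊓ V ≤ F) :
    (conjugatesDiff V F).ncard = V.index * ((V : Set G) \ F).ncard := by
  let f : (G ⧸ V) × ((V : Set G) \ F : Set G) → conjugatesDiff V F := fun a =>
    ⟨a.1.out * a.2 * a.1.out⁻¹,
      Set.mem_iUnion.2 ⟨a.1.out, conj_mem_conj_smul_iff.2 a.2.2.1⟩,
      fun h => a.2.2.2 (by simpa [mul_assoc] using hF.conj_mem _ h a.1.out⁻¹)⟩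
  have hf : Function.Bijective f := by
    constructor
    · rintro ⟨c, y, hy⟩ ⟨d, z, hz⟩ hfyz
      have hyz : (d.out⁻¹ * c.out) * y * (d.out⁻¹ * c.out)⁻¹ = z := by
        have := congrArg Subtype.val hfyz
        simp only [f] at this
        calc _ = d.out⁻¹ * (c.out * y * c.out⁻¹) * d.out := by group
          _ = z := by rw [this]; group
      have hdc : d.out⁻¹ * c.out ∈ V := by
        by_contra hg
        exact hz.2 (hTI _ hg ⟨hyz ▸ conj_mem_conj_smul_iff.2 hy.1, hz.1⟩)
      have hcd : c = d := by
        rw [← QuotientGroup.out_eq' c, ← QuotientGroup.out_eq' d]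
        exact (QuotientGroup.eq.2 hdc).symm
      subst hcd
      simp only [inv_mul_cancel, one_mul, inv_one, mul_one] at hyz
      subst hyz
      rfl
    · rintro ⟨x, hxV, hxF⟩
      obtain ⟨g, hxg⟩ := Set.mem_iUnion.1 hxV
      obtain ⟨h, hh⟩ := QuotientGroup.mk_out_eq_mul V g
      have hy : (g : G ⧸ V).out⁻¹ * x * (g : G ⧸ V).out ∈ V := by
        rw [hh]
        simpa [mul_assoc] using
          V.mul_mem (V.mul_mem (V.inv_mem h.2) (mem_conj_smul_iff.1 hxg)) h.2
      refine ⟨⟨g, _, hy, fun h => hxF ?_⟩, Subtype.ext ?_⟩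
      · simpa [mul_assoc] using hF.conj_mem _ h (g : G ⧸ V).out
      · simp [f, mul_assoc]
  rw [← Nat.card_coe_set_eq, ← Nat.card_congr (Equiv.ofBijective f hf), Nat.card_prod,
    Nat.card_coe_set_eq]
  rfl

theorem card_le_two_mul_ncard_conjugatesDiff [Finite G] (hF : F.Normal)
    (hTI : ∀ g ∉ V, MulAut.conj g • V ⊓ V ≤ F) (hVF : ¬V ≤ F) :
    Nat.card G ≤ 2 * (conjugatesDiff V F).ncard := by
  have hsplit : Nat.card (V ⊓ F : Subgroup G) + ((V : Set G) \ F).ncard = Nat.card V := by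
    rw [← ncard_coe, ← ncard_coe, coe_inf]
    exact Set.ncard_inter_add_ncard_sdiff_eq_ncard _ _
  have hhalf := two_mul_card_le_of_lt (inf_lt_left.2 hVF)
  rw [ncard_conjugatesDiff hF hTI, ← V.card_mul_index]
  nlinarith

theorem eq_top_of_compl_subset_conjugatesDiff [Finite G] (hF : F.Normal)
    (hTI : ∀ g ∉ W, MulAut.conj g • W ⊓ W ≤ F) (hFW : F ≤ W)
    (hcov : (F : Set G)ᶜ ⊆ conjugatesDiff W F) : W = ⊤ := by
  have hcard : W.index * (Nat.card W - Nat.card F) = Nat.card G - Nat.card F := by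
    rw [← ncard_coe W, ← ncard_coe F, ← Set.ncard_sdiff hFW, ← ncard_conjugatesDiff hF hTI,
      conjugatesDiff_subset_compl.antisymm hcov, Set.ncard_compl]
  have hFpos : 0 < Nat.card F := Nat.card_pos
  have hqF : W.index * Nat.card F = 1 * Nat.card F := by
    have := Nat.mul_le_mul_left W.index (card_le_of_le hFW)
    have := Nat.le_mul_of_pos_left (Nat.card F) (Nat.pos_of_ne_zero W.index_ne_zero_of_finite)
    have hG : W.index * Nat.card W = Nat.card G := by rw [mul_comm, card_mul_index]
    rw [Nat.mul_sub] at hcard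
    omega
  rw [← index_eq_one]
  exact Nat.eq_of_mul_eq_mul_right hFpos hqF

theorem eq_top_of_selfNormalizing_partition [Finite G] {𝒱 : Set (Subgroup G)} (hF : F.Normal)
    (hself : ∀ V ∈ 𝒱, normalizer (V : Set G) = V)
    (hTI : ∀ V ∈ 𝒱, ∀ V' ∈ 𝒱, V ≠ V' → V ⊓ V' ≤ F)
    (hconj : ∀ V ∈ 𝒱, ∀ g : G, MulAut.conj g • V ∈ 𝒱)
    (hcover : ∀ x ∉ F, ∃ V ∈ 𝒱, x ∈ V) (hW : W ∈ 𝒱) (hFW : F < W) : W = ⊤ := by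
  have hconjTI (V) (hV : V ∈ 𝒱) (g) (hg : g ∉ V) : MulAut.conj g • V ⊓ V ≤ F :=
    hTI _ (hconj V hV g) V hV fun h => hg (by rw [← hself V hV, ← conj_smul_eq_self_iff, h])
  by_contra hWtop
  obtain ⟨x, hxF, hxW⟩ := Set.not_subset.1
    (mt (eq_top_of_compl_subset_conjugatesDiff hF (hconjTI W hW) hFW.le) hWtop)
  obtain ⟨L, hL, hxL⟩ := hcover x hxF
  have hdisj : Disjoint (conjugatesDiff W F) (conjugatesDiff L F) := by
    refine Set.disjoint_left.2 fun y ⟨hyW, hyF⟩ ⟨hyL, _⟩ => hxW ⟨?_, hxF⟩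
    obtain ⟨a, hya⟩ := Set.mem_iUnion.1 hyW
    obtain ⟨b, hyb⟩ := Set.mem_iUnion.1 hyL
    have hab : MulAut.conj a • W = MulAut.conj b • L := by
      by_contra hne
      exact hyF (hTI _ (hconj W hW a) _ (hconj L hL b) hne ⟨hya, hyb⟩)
    refine Set.mem_iUnion.2 ⟨b⁻¹ * a, ?_⟩
    rwa [map_mul, mul_smul, hab, map_inv, inv_smul_smul]
  have hW2 := card_le_two_mul_ncard_conjugatesDiff hF (hconjTI W hW) hFW.not_ge
  have hL2 := card_le_two_mul_ncard_conjugatesDiff hF (hconjTI L hL) fun hLF => hxF (hLF hxL)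
  have hunion : (conjugatesDiff W F ∪ conjugatesDiff L F).ncard ≤ (F : Set G)ᶜ.ncard :=
    Set.ncard_le_ncard (Set.union_subset conjugatesDiff_subset_compl conjugatesDiff_subset_compl)
  rw [Set.ncard_union_eq hdisj, Set.ncard_compl, ncard_coe] at hunion
  have : 0 < Nat.card F := Nat.card_pos
  have := F.card_le_card_group
  omega

end Counting

namespace SemiNilpotent

variable {G : Type*} [Group G] [Finite G]

theorem inf_le_fittingSubgroup (h : SemiNilpotent G) {V₁ V₂ : Subgroup G}
    (h₁ : IsMaximalNilpotent V₁) (h₂ : IsMaximalNilpotent V₂) (hne : V₁ ≠ V₂) :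
    V₁ ⊓ V₂ ≤ FittingSubgroup G := by
  by_contra hnot
  let B : Set (Subgroup G) := {D | ¬D ≤ FittingSubgroup G ∧ ∃ U₁ U₂,
    IsMaximalNilpotent U₁ ∧ IsMaximalNilpotent U₂ ∧ U₁ ≠ U₂ ∧ U₁ ⊓ U₂ = D}
  obtain ⟨D, -, hD⟩ := B.toFinite.exists_le_maximal ⟨hnot, V₁, V₂, h₁, h₂, hne, rfl⟩
  obtain ⟨hDF, U₁, U₂, hU₁, hU₂, hUne, rfl⟩ := hD.prop
  have hDnil : Group.IsNilpotent ↥(U₁ ⊓ U₂) := isNilpotent_of_le_s9 hU₁.1 inf_le_left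
  obtain ⟨M, hNM, hM⟩ :=
    exists_isMaximalNilpotent_ge (h _ hDnil fun hn => hDF (le_fittingSubgroup hn hDnil))
  have hMeq (V : Subgroup G) (hV : IsMaximalNilpotent V) (hlt : U₁ ⊓ U₂ < V) : M = V := by
    by_contra hMV
    have hlt' : U₁ ⊓ U₂ < M ⊓ V :=
      (lt_normalizer_inf_of_isNilpotent hV.1 hlt).trans_le (inf_le_inf_right V hNM)
    exact hD.not_gt ⟨fun hle => hDF (hlt'.le.trans hle), M, V, hM, hV, hMV, rfl⟩ hlt'
  exact hUne ((hMeq U₁ hU₁ (inf_lt_left.2 (hU₁.not_le hU₂ hUne))).symm.trans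
    (hMeq U₂ hU₂ (inf_lt_right.2 (hU₂.not_le hU₁ hUne.symm))))

theorem normal_of_fittingSubgroup_le (h : SemiNilpotent G) {W : Subgroup G}
    (hW : IsMaximalNilpotent W) (hFW : FittingSubgroup G ≤ W) : W.Normal := by
  by_contra hWn
  have hnn (V : Subgroup G) (hV : IsMaximalNilpotent V) : ¬V.Normal := fun hVn =>
    hWn (hV.2 W hW.1 ((le_fittingSubgroup hVn hV.1).trans hFW) ▸ hVn)
  have hFW' : FittingSubgroup G < W := hFW.lt_of_ne fun hEq => hWn (hEq ▸ inferInstance)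
  have hWtop := eq_top_of_selfNormalizing_partition (𝒱 := {V | IsMaximalNilpotent V})
    inferInstance (fun V hV => hV.2 _ (h V hV.1 (hnn V hV)) le_normalizer)
    (fun _ h₁ _ h₂ hne => h.inf_le_fittingSubgroup h₁ h₂ hne)
    (fun _ hV g => hV.conj_smul g)
    (fun x _ => exists_isMaximalNilpotent_mem x) hW hFW'
  exact hWn (hWtop ▸ normal_top)

end SemiNilpotent

theorem fitting_maximal_nilpotent_of_semiNilpotent
    (G : Type*) [Group G] [Finite G] (h : SemiNilpotent G) :
    IsMaximalNilpotent (FittingSubgroup G) := by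
  refine ⟨fittingSubgroup_isNilpotent, fun V hV hFV => ?_⟩
  obtain ⟨M, hVM, hM⟩ := exists_isMaximalNilpotent_ge hV
  have hMF := le_fittingSubgroup (h.normal_of_fittingSubgroup_le hM (hFV.trans hVM)) hM.1
  exact le_antisymm (hVM.trans hMF) hFV
end

section
/- Let G be a finite group, p a prime, H a p-subgroup of G, and N a soluble normal subgroup of G such that either N ≤ H or gcd(|N|, |H|) = 1. If N_G(H)/C_G(H) is a p-group, then N_{G/N}(HN/N)/C_{G/N}(HN/N) is a p-group. -/
open Subgroup

/-!
If `N ≤ H` then `HN = H`; otherwise `|N|` is prime to `p` and `H` is a Sylow `p`-subgroup of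
`HN`, so the Frattini argument gives `N_G(HN) = N_G(H) N`. Hence the normalizer of `HN/N` in
`G/N` is the image of `N_G(H)`, and `N_G(H)/C_G(H)` maps onto
`N_{G/N}(HN/N)/C_{G/N}(HN/N)`, which is therefore a `p`-group.
-/

namespace Subgroup

variable {G : Type*} [Group G]

theorem relIndex_sup_right_of_normal (H N : Subgroup G) [N.Normal] [N.FiniteIndex] :
    H.relIndex (H ⊔ N) = H.relIndex N := by
  have hN : N.relIndex H ≠ 0 := (isFiniteRelIndex_of_finiteIndex (K := H)).relIndex_ne_zero
  have key : N.relIndex H * H.relIndex (H ⊔ N) = N.relIndex H * H.relIndex N :=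
    calc N.relIndex H * H.relIndex (H ⊔ N)
        = (H ⊓ N).relIndex H * H.relIndex (H ⊔ N) := by rw [inf_relIndex_left]
      _ = (H ⊓ N).relIndex (H ⊔ N) := relIndex_mul_relIndex _ _ _ inf_le_left le_sup_left
      _ = H.relIndex N * N.relIndex (H ⊔ N) := by
        rw [← relIndex_inf_mul_relIndex, inf_of_le_left le_sup_right]
      _ = N.relIndex H * H.relIndex N := by rw [relIndex_sup_right, mul_comm]
  exact Nat.eq_of_mul_eq_mul_left (Nat.pos_of_ne_zero hN) key

theorem normalizer_le_normalizer_sup_of_isPGroup [Finite G] {p : ℕ} [Fact p.Prime]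
    {H K : Subgroup G} (hHK : H ≤ K) (hH : IsPGroup p H) (hindex : ¬ p ∣ H.relIndex K) :
    normalizer (K : Set G) ≤ normalizer (H : Set G) ⊔ K := by
  set M := normalizer (K : Set G)
  have hKM : K ≤ M := le_normalizer
  have : (K.subgroupOf M).Normal := normal_in_normalizer
  have hP : IsPGroup p ((H.subgroupOf M).subgroupOf (K.subgroupOf M)) :=
    (hH.comap_of_injective _ M.subtype_injective).comap_of_injective _ (subtype_injective _)
  have hPindex : ¬ p ∣ ((H.subgroupOf M).subgroupOf (K.subgroupOf M)).index := by
    rwa [← relIndex, relIndex_subgroupOf hKM]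
  have frattini := Sylow.normalizer_sup_eq_top (hP.toSylow hPindex)
  rw [IsPGroup.toSylow_coe, subgroupOf_map_subtype, inf_of_le_left (subgroupOf_mono M hHK),
    ← subgroupOf_normalizer_eq (hHK.trans hKM)] at frattini
  have hsup : (normalizer (H : Set G)).subgroupOf M ⊔ K.subgroupOf M ≤
      (normalizer (H : Set G) ⊔ K).subgroupOf M :=
    sup_le (comap_mono le_sup_left) (comap_mono le_sup_right)
  intro g hg
  exact mem_subgroupOf.mp (hsup (frattini.ge (mem_top ⟨g, hg⟩)))

theorem normalizer_sup_le_normalizer_sup_of_isPGroup [Finite G] {p : ℕ} [Fact p.Prime]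
    {H N : Subgroup G} [N.Normal] (hH : IsPGroup p H)
    (hHN : N ≤ H ∨ Nat.Coprime (Nat.card N) (Nat.card H)) :
    normalizer ((H ⊔ N : Subgroup G) : Set G) ≤ normalizer (H : Set G) ⊔ N := by
  rcases hHN with hNH | hcop
  · rw [sup_of_le_left hNH]
    exact le_sup_left
  rcases hH.card_eq_or_dvd with hcard | hpH
  · rw [card_eq_one.mp hcard, normalizer_eq_top_iff.mpr normal_bot, top_sup_eq]
    exact le_top
  have hpN : ¬ p ∣ Nat.card N := fun hpN =>
    (Fact.out : p.Prime).ne_one (Nat.eq_one_of_dvd_coprimes hcop hpN hpH)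
  have hindex : ¬ p ∣ H.relIndex (H ⊔ N) := by
    rw [relIndex_sup_right_of_normal]
    exact fun hp => hpN (hp.trans (relIndex_dvd_card H N))
  calc normalizer ((H ⊔ N : Subgroup G) : Set G)
      ≤ normalizer (H : Set G) ⊔ (H ⊔ N) :=
        normalizer_le_normalizer_sup_of_isPGroup le_sup_left hH hindex
    _ = normalizer (H : Set G) ⊔ N := by rw [← sup_assoc, sup_of_le_left le_normalizer]

theorem normalizer_map_eq_of_surjective {G' : Type*} [Group G'] {f : G →* G'}
    (hf : Function.Surjective f) {H : Subgroup G}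
    (hnormalizer :
      normalizer ((H ⊔ f.ker : Subgroup G) : Set G) ≤ normalizer (H : Set G) ⊔ f.ker) :
    normalizer (H.map f : Set G') = (normalizer (H : Set G)).map f := by
  refine le_antisymm ?_ (le_normalizer_map f)
  calc normalizer (H.map f : Set G')
      = (normalizer ((H ⊔ f.ker : Subgroup G) : Set G)).map f := by
        rw [← comap_map_eq, ← comap_normalizer_eq_of_surjective _ hf,
          map_comap_eq_self_of_surjective hf]
    _ ≤ (normalizer (H : Set G) ⊔ f.ker).map f := map_mono hnormalizer
    _ = (normalizer (H : Set G)).map f := by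
        rw [← comap_map_eq, map_comap_eq_self_of_surjective hf]

end Subgroup

theorem FrobeniusNC.map {G G' : Type*} [Group G] [Group G'] {p : ℕ} {H : Subgroup G}
    (hH : FrobeniusNC p H) (f : G →* G')
    (hf : normalizer (H.map f : Set G') ≤ (normalizer (H : Set G)).map f) :
    FrobeniusNC p (H.map f) := by
  let φ : normalizer (H : Set G) →* normalizer (H.map f : Set G') :=
    (f.comp (normalizer (H : Set G)).subtype).codRestrict (normalizer (H.map f : Set G'))
      fun x => le_normalizer_map f (mem_map_of_mem f x.2)
  have hφ : Function.Surjective φ := fun y => by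
    obtain ⟨x, hx, hxy⟩ := hf y.2
    exact ⟨⟨x, hx⟩, Subtype.ext hxy⟩
  have hC : (centralizer (H : Set G)).subgroupOf (normalizer (H : Set G)) ≤
      ((centralizer (H.map f : Set G')).subgroupOf (normalizer (H.map f : Set G'))).comap φ :=
    fun _ hx => map_centralizer_le_centralizer_image _ f (mem_map_of_mem f hx)
  exact hH.of_surjective _
    (QuotientGroup.map_surjective_of_surjective _ _ φ (QuotientGroup.mk_surjective.comp hφ) hC)

theorem frobenius_condition_quotient_general
    (G : Type*) [Group G] [Finite G] (p : ℕ) (hp : p.Prime)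
    (H N : Subgroup G) [N.Normal] (hH : IsPGroup p H)
    (hcond : N ≤ H ∨ Nat.Coprime (Nat.card N) (Nat.card H))
    (hfrob : FrobeniusNC p H) :
    FrobeniusNC p (H.map (QuotientGroup.mk' N)) := by
  have : Fact p.Prime := ⟨hp⟩
  have hnormalizer : normalizer ((H ⊔ (QuotientGroup.mk' N).ker : Subgroup G) : Set G) ≤
      normalizer (H : Set G) ⊔ (QuotientGroup.mk' N).ker := by
    rw [QuotientGroup.ker_mk']
    exact normalizer_sup_le_normalizer_sup_of_isPGroup hH hcond
  exact hfrob.map _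
    (normalizer_map_eq_of_surjective (QuotientGroup.mk'_surjective N) hnormalizer).le

theorem frobenius_condition_quotient
    (G : Type*) [Group G] [Finite G] (p : ℕ) (hp : p.Prime)
    (H N : Subgroup G) [N.Normal] (hH : IsPGroup p H) (hNsol : IsSolvable N)
    (hcond : N ≤ H ∨ Nat.Coprime (Nat.card N) (Nat.card H))
    (hfrob : FrobeniusNC p H) :
    FrobeniusNC p (H.map (QuotientGroup.mk' N)) :=
  frobenius_condition_quotient_general G p hp H N hH hcond hfrob
end
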